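/- Let A be a randomized algorithm from L2^{n×d} to L2^{n×d} satisfying (B, ε, δ)-targeted differential privacy with B, ε > 0, and let T : L2^{n×d} → {0,1} be a minimally responsive deterministic function. If A is γ-accurate for T with γ ∈ [1/2, 1), then ⌈2/B⌉ ≥ ⌈ε^{-1} ln Q⌉, where Q = (δ + γ(e^ε − 1))/(δ + (1 − γ)(e^ε − 1)). -/

import Mathlib

open MeasureTheory Real

noncomputable section

/-- Datasets: real n×d matrices as functions. -/
abbrev Mat (n d : ℕ) := Fin n → Fin d → ℝ

/-- Euclidean (L2) distance between two rows. -/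
def rowDist {d : ℕ} (u v : Fin d → ℝ) : ℝ := Real.sqrt (∑ j, (u j - v j) ^ 2)

/-- The set of n×d matrices each of whose rows has L2 norm at most 1. -/
def L2Ball (n d : ℕ) : Set (Mat n d) :=
  {X | ∀ i, Real.sqrt (∑ j, (X i j) ^ 2) ≤ 1}

/-- Classic neighbors: agree on exactly n−1 rows. -/
def ClassicNeighbors {n d : ℕ} (X X' : Mat n d) : Prop :=
  ∃ i, X i ≠ X' i ∧ ∀ j, j ≠ i → X j = X' j

/-- B-neighbors: classic neighbors whose differing rows are within L2 distance B. -/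
def BNeighbors {n d : ℕ} (B : ℝ) (X X' : Mat n d) : Prop :=
  ∃ i, X i ≠ X' i ∧ (∀ j, j ≠ i → X j = X' j) ∧ rowDist (X i) (X' i) ≤ B

/-- (B, ε, δ)-targeted differential privacy. -/
def TDP {n d : ℕ} {Ω : Type*} [MeasurableSpace Ω]
    (A : Mat n d → Measure Ω) (B ε δ : ℝ) : Prop :=
  ∀ X ∈ L2Ball n d, ∀ X' ∈ L2Ball n d, BNeighbors B X X' →
    ∀ E : Set Ω, MeasurableSet E →
      A X E ≤ ENNReal.ofReal (Real.exp ε) * A X' E + ENNReal.ofReal δ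

/-- (ε, δ)-classic differential privacy. -/
def ClassicDP {n d : ℕ} {Ω : Type*} [MeasurableSpace Ω]
    (A : Mat n d → Measure Ω) (ε δ : ℝ) : Prop :=
  ∀ X ∈ L2Ball n d, ∀ X' ∈ L2Ball n d, ClassicNeighbors X X' →
    ∀ E : Set Ω, MeasurableSet E →
      A X E ≤ ENNReal.ofReal (Real.exp ε) * A X' E + ENNReal.ofReal δ

/-- Cumulative row-wise L2 distance between two datasets. -/
def cumDist {n d : ℕ} (X X' : Mat n d) : ℝ := ∑ i, rowDist (X i) (X' i)

/-- Squared Frobenius norm. -/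
def frobSq {a b : ℕ} (M : Fin a → Fin b → ℝ) : ℝ := ∑ i, ∑ j, (M i j) ^ 2

/-!
Join the neighbours `X`, `X'` on which `T` differs by the segment between them, cut into
`s = ⌈2/B⌉₊` pieces. Rows in the unit ball are at distance at most `2`, so consecutive points are
`B`-neighbours, and chaining the privacy inequality along them gives, for `E = {T = T X}`,
`P(A X ∈ E) ≤ e^{sε} P(A X' ∈ E) + δ (e^{sε} - 1) / (e^ε - 1)`. Accuracy bounds the left side
below by `γ` and `P(A X' ∈ E)` above by `1 - γ`; solving for `e^{sε}` gives `Q ≤ e^{sε}`.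
-/

open AffineMap Finset

theorem rowDist_eq_dist {d : ℕ} (u v : Fin d → ℝ) :
    rowDist u v = dist (WithLp.toLp 2 u) (WithLp.toLp 2 v) := by
  simp [rowDist, EuclideanSpace.dist_eq, Real.dist_eq, sq_abs]

theorem mem_L2Ball_iff {n d : ℕ} {X : Mat n d} :
    X ∈ L2Ball n d ↔
      ∀ i, WithLp.toLp 2 (X i) ∈ Metric.closedBall (0 : EuclideanSpace ℝ (Fin d)) 1 := by
  simp [L2Ball, EuclideanSpace.norm_eq, sq_abs]

theorem convex_L2Ball (n d : ℕ) : Convex ℝ (L2Ball n d) := by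
  intro X hX Y hY a b ha hb hab
  rw [mem_L2Ball_iff] at hX hY ⊢
  intro i
  simpa using convex_closedBall (0 : EuclideanSpace ℝ (Fin d)) 1 (hX i) (hY i) ha hb hab

theorem rowDist_le_two {n d : ℕ} {X X' : Mat n d} (hX : X ∈ L2Ball n d) (hX' : X' ∈ L2Ball n d)
    (i : Fin n) : rowDist (X i) (X' i) ≤ 2 := by
  rw [mem_L2Ball_iff] at hX hX'
  rw [rowDist_eq_dist]
  linarith [dist_triangle (WithLp.toLp 2 (X i)) 0 (WithLp.toLp 2 (X' i)),
    Metric.mem_closedBall.1 (hX i), Metric.mem_closedBall'.1 (hX' i)]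

theorem rowDist_lineMap_lineMap {d : ℕ} (u v : Fin d → ℝ) (t t' : ℝ) :
    rowDist (lineMap u v t) (lineMap u v t') = |t - t'| * rowDist u v := by
  have h (c : ℝ) : WithLp.toLp 2 (lineMap u v c) =
      lineMap (WithLp.toLp 2 u : EuclideanSpace ℝ (Fin d)) (WithLp.toLp 2 v) c := by
    ext j; simp [lineMap_apply_module]
  rw [rowDist_eq_dist, rowDist_eq_dist, h, h, dist_lineMap_lineMap, Real.dist_eq]

theorem BNeighbors.mono {n d : ℕ} {B B' : ℝ} {X X' : Mat n d} (h : BNeighbors B X X')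
    (hB : B ≤ B') : BNeighbors B' X X' := by
  obtain ⟨i, hne, heq, hdist⟩ := h
  exact ⟨i, hne, heq, hdist.trans hB⟩

theorem ClassicNeighbors.bNeighbors_lineMap {n d : ℕ} {X X' : Mat n d}
    (h : ClassicNeighbors X X') (hX : X ∈ L2Ball n d) (hX' : X' ∈ L2Ball n d) {t t' : ℝ}
    (ht : t ≠ t') : BNeighbors (2 * |t - t'|) (lineMap X X' t) (lineMap X X' t') := by
  obtain ⟨i, hne, heq⟩ := h
  refine ⟨i, ?_, fun j hj => ?_, ?_⟩
  · simpa only [pi_lineMap_apply] using (lineMap_injective ℝ hne).ne ht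
  · simp only [pi_lineMap_apply, heq j hj, lineMap_same_apply]
  · rw [pi_lineMap_apply, pi_lineMap_apply, rowDist_lineMap_lineMap, mul_comm]
    exact mul_le_mul_of_nonneg_right (rowDist_le_two hX hX' i) (abs_nonneg _)

theorem ClassicNeighbors.exists_bNeighbors_chain {n d : ℕ} {X X' : Mat n d}
    (h : ClassicNeighbors X X') (hX : X ∈ L2Ball n d) (hX' : X' ∈ L2Ball n d) {B : ℝ} {s : ℕ}
    (hs : 0 < s) (hsB : 2 / s ≤ B) :
    ∃ Y : ℕ → Mat n d, Y 0 = X ∧ Y s = X' ∧ (∀ k ≤ s, Y k ∈ L2Ball n d) ∧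
      ∀ k, BNeighbors B (Y k) (Y (k + 1)) := by
  have hs' : (0 : ℝ) < s := Nat.cast_pos.2 hs
  refine ⟨fun k => lineMap X X' ((k : ℝ) / s), by simp, by simp [hs'.ne'], fun k hk => ?_,
    fun k => ?_⟩
  · refine (convex_L2Ball n d).lineMap_mem hX hX' ⟨by positivity, ?_⟩
    exact div_le_one_of_le₀ (Nat.cast_le.2 hk) hs'.le
  · have hstep : (k : ℝ) / s - (k + 1 : ℕ) / s = -(1 / s) := by push_cast; ring
    refine (h.bNeighbors_lineMap hX hX' (sub_ne_zero.1 (hstep ▸ by simp [hs'.ne']))).mono ?_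
    rw [hstep, abs_neg, abs_of_pos (by positivity), mul_one_div]
    exact hsB

theorem le_pow_mul_add_mul_geom_sum {R : Type*} [CommSemiring R] [PartialOrder R]
    [IsOrderedRing R] {a b : R} (ha : 0 ≤ a) {p : ℕ → R} {s : ℕ}
    (h : ∀ k < s, p k ≤ a * p (k + 1) + b) :
    p 0 ≤ a ^ s * p s + b * ∑ j ∈ range s, a ^ j := by
  induction s generalizing p with
  | zero => simp
  | succ s ih =>
    have htail := ih (p := fun k => p (k + 1)) fun k hk => h (k + 1) (by omega)
    calc p 0 ≤ a * p 1 + b := h 0 s.succ_pos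
      _ ≤ a * (a ^ s * p (s + 1) + b * ∑ j ∈ range s, a ^ j) + b := by gcongr
      _ = a ^ (s + 1) * p (s + 1) + b * ∑ j ∈ range (s + 1), a ^ j := by
        rw [geom_sum_succ]; ring

section Privacy

variable {n d : ℕ} {Ω : Type*} [MeasurableSpace Ω] {A : Mat n d → Measure Ω}
  [∀ X, IsFiniteMeasure (A X)] {B ε δ : ℝ} {X X' : Mat n d} {E : Set Ω}

theorem TDP.measureReal_le (hA : TDP A B ε δ) (hδ : 0 ≤ δ) (hX : X ∈ L2Ball n d)
    (hX' : X' ∈ L2Ball n d) (h : BNeighbors B X X') (hE : MeasurableSet E) :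
    (A X).real E ≤ exp ε * (A X').real E + δ := by
  have := ENNReal.toReal_mono (by finiteness) (hA X hX X' hX' h E hE)
  rwa [ENNReal.toReal_add (by finiteness) (by finiteness), ENNReal.toReal_mul,
    ENNReal.toReal_ofReal (exp_pos ε).le, ENNReal.toReal_ofReal hδ] at this

/-- The Switch Lemma, with `s` steps of length `2 / s` along the segment from `X` to `X'`. -/
theorem TDP.measureReal_le_of_classicNeighbors (hA : TDP A B ε δ) (hδ : 0 ≤ δ)
    (h : ClassicNeighbors X X') (hX : X ∈ L2Ball n d) (hX' : X' ∈ L2Ball n d) {s : ℕ}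
    (hs : 0 < s) (hsB : 2 / s ≤ B) (hE : MeasurableSet E) :
    (A X).real E ≤ exp ε ^ s * (A X').real E + δ * ∑ j ∈ range s, exp ε ^ j := by
  obtain ⟨Y, rfl, rfl, hY, hYB⟩ := h.exists_bNeighbors_chain hX hX' hs hsB
  exact le_pow_mul_add_mul_geom_sum (exp_pos ε).le fun k hk =>
    hA.measureReal_le hδ (hY k hk.le) (hY (k + 1) hk) (hYB k) hE

end Privacy

theorem measureReal_setOf_eq_le_one_sub {Ω : Type*} [MeasurableSpace Ω] {μ : Measure Ω}
    [IsProbabilityMeasure μ] {f : Ω → Bool} (hf : Measurable f) {b b' : Bool} (hb : b ≠ b')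
    {γ : ℝ} (h : ENNReal.ofReal γ ≤ μ {ω | f ω = b'}) : μ.real {ω | f ω = b} ≤ 1 - γ := by
  have hcompl : {ω | f ω = b}ᶜ = {ω | f ω = b'} := by
    ext ω
    change ¬f ω = b ↔ f ω = b'
    revert hb
    cases f ω <;> cases b <;> cases b' <;> decide
  rw [← hcompl, ENNReal.ofReal_le_iff_le_toReal (by finiteness), ← measureReal_def,
    probReal_compl_eq_one_sub (s := {ω | f ω = b}) (hf (measurableSet_singleton b))] at h
  linarith

theorem div_le_pow_of_le_pow_mul_add_mul_geom_sum {a δ γ : ℝ} {s : ℕ} (ha : 1 < a)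
    (hδ : 0 ≤ δ) (hγ : γ < 1) (h : γ ≤ a ^ s * (1 - γ) + δ * ∑ j ∈ range s, a ^ j) :
    (δ + γ * (a - 1)) / (δ + (1 - γ) * (a - 1)) ≤ a ^ s := by
  have hc : 0 < a - 1 := sub_pos.2 ha
  rw [div_le_iff₀ (by nlinarith)]
  linear_combination (a - 1) * h + δ * geom_sum_mul a s

/-- necessary condition for γ-accurate targeting under
(B, ε, δ)-targeted differential privacy: ⌈2/B⌉ ≥ ⌈ε⁻¹ ln Q⌉. -/
theorem targeting_accuracy_necessary {n d : ℕ}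
    (A : Mat n d → Measure (Mat n d))
    [∀ X, IsProbabilityMeasure (A X)]
    (B ε δ γ : ℝ) (hB : 0 < B) (hε : 0 < ε) (hδ : 0 ≤ δ)
    (hA : TDP A B ε δ)
    (T : Mat n d → Bool) (hT : Measurable T)
    -- minimal responsiveness
    (hmr : ∃ X ∈ L2Ball n d, ∃ X' ∈ L2Ball n d, ClassicNeighbors X X' ∧ T X ≠ T X')
    (hγ : γ ∈ Set.Ico (1 / 2 : ℝ) 1)
    -- γ-accuracy of A for T
    (hacc : ∀ X ∈ L2Ball n d, ENNReal.ofReal γ ≤ A X {Z | T Z = T X}) :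
    ⌈(2 : ℝ) / B⌉ ≥
      ⌈ε⁻¹ * Real.log ((δ + γ * (Real.exp ε - 1)) / (δ + (1 - γ) * (Real.exp ε - 1)))⌉ := by
  obtain ⟨hγ_half, hγ_lt⟩ := hγ
  obtain ⟨X, hX, X', hX', hXX', hTX⟩ := hmr
  set s := ⌈2 / B⌉₊
  have hs : 0 < s := Nat.ceil_pos.2 (by positivity)
  have hsB : 2 / (s : ℝ) ≤ B := by
    rw [div_le_iff₀ (by positivity), ← div_le_iff₀' hB]
    exact Nat.le_ceil _
  set E := {Z | T Z = T X}
  have hE : MeasurableSet E := hT (measurableSet_singleton _)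
  have hγX : γ ≤ (A X).real E := (ENNReal.ofReal_le_iff_le_toReal (by finiteness)).1 (hacc X hX)
  have hγX' : (A X').real E ≤ 1 - γ := measureReal_setOf_eq_le_one_sub hT hTX (hacc X' hX')
  have hQ := div_le_pow_of_le_pow_mul_add_mul_geom_sum (one_lt_exp_iff.2 hε) hδ hγ_lt <|
    (hγX.trans (hA.measureReal_le_of_classicNeighbors hδ hXX' hX hX' hs hsB hE)).trans
      (by gcongr)
  have hc : 0 < exp ε - 1 := sub_pos.2 (one_lt_exp_iff.2 hε)
  rw [ge_iff_le, Int.ceil_le, ← Int.natCast_ceil_eq_ceil (by positivity : 0 ≤ 2 / B),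
    Int.cast_natCast, inv_mul_le_iff₀ hε]
  calc log ((δ + γ * (exp ε - 1)) / (δ + (1 - γ) * (exp ε - 1)))
      ≤ log (exp ε ^ s) := log_le_log (by apply div_pos <;> nlinarith) hQ
    _ = ε * s := by rw [← exp_nat_mul, log_exp, mul_comm]
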